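/- arXiv:1101.0333 — 3 statements merged into one kernel-verified Lean document; each statement's English description precedes it below -/
import Mathlib

section
/- Let E be a finite partially ordered set and P a stochastic matrix on E. Then P is ↑-Möbius monotone if and only if for every ↑-Möbius monotone function f : E → ℝ, the function e ↦ Σ_{e'∈E} P(e,e') f(e') is again ↑-Möbius monotone. -/
open Finset Matrix

/-- The zeta matrix of a finite poset: `C(e,e') = 1` if `e ≤ e'`, else `0`.
Its matrix inverse is the Möbius function of the poset. -/
noncomputable def zeta (E : Type*) [Fintype E] [PartialOrder E]
    [DecidableRel ((· ≤ ·) : E → E → Prop)] : Matrix E E ℝ :=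
  Matrix.of fun e e' => if e ≤ e' then 1 else 0

/-- `P` is a stochastic matrix: nonnegative entries, rows summing to 1. -/
def IsStochastic {E : Type*} [Fintype E] (P : Matrix E E ℝ) : Prop :=
  (∀ e e', 0 ≤ P e e') ∧ ∀ e, ∑ e', P e e' = 1

/-- A function `f` (viewed as a row vector) is ↑-Möbius monotone if every entry
of the row vector `f C⁻¹` is nonnegative. -/
def UpMobiusMonotoneFun {E : Type*} [Fintype E] [DecidableEq E] [PartialOrder E]
    [DecidableRel ((· ≤ ·) : E → E → Prop)] (f : E → ℝ) : Prop :=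
  ∀ e, 0 ≤ (f ᵥ* (zeta E)⁻¹) e

/-
Writing `M = (Cᵀ)⁻¹ P Cᵀ` and `m = f C⁻¹` for the Möbius coefficients of `f`, the Möbius
coefficients of `P f` are `M m`. Hence a nonnegative `M` preserves nonnegative coefficient vectors,
and conversely applying `P` to the `e'`-th row of `C` (whose coefficient vector is the indicator of
`e'`) recovers the column `M · e'` as a coefficient vector. The zeta matrix is invertible because it
is unitriangular with respect to any linear extension of the order.
-/

theorem Matrix.det_eq_prod_diag_of_apply_eq_zero_of_not_le {R E : Type*} [CommRing R]
    [Fintype E] [DecidableEq E] [PartialOrder E] (M : Matrix E E R)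
    (hM : ∀ i j, ¬i ≤ j → M i j = 0) : M.det = ∏ i, M i i := by
  let _ : Fintype (LinearExtension E) := ‹Fintype E›
  let _ : DecidableEq (LinearExtension E) := ‹DecidableEq E›
  let e : LinearExtension E ≃ E := Equiv.refl E
  have hupper : (M.submatrix e e).IsUpperTriangular := fun i j hji =>
    hM (e i) (e j) fun hij =>
      hji.not_ge
        (toLinearExtension.monotone hij : toLinearExtension (e i) ≤ toLinearExtension (e j))
  rw [← det_submatrix_equiv_self e, det_of_isUpperTriangular hupper]
  exact Fintype.prod_equiv e _ _ fun _ => rfl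

theorem det_zeta (E : Type*) [Fintype E] [DecidableEq E] [PartialOrder E]
    [DecidableRel ((· ≤ ·) : E → E → Prop)] : (zeta E).det = 1 := by
  rw [(zeta E).det_eq_prod_diag_of_apply_eq_zero_of_not_le fun i j h => by simp [zeta, h]]
  exact Fintype.prod_eq_one _ fun i => by simp [zeta]

namespace Matrix

variable {n R : Type*} [Fintype n]

theorem mulVec_vecMul_nonsing_inv [DecidableEq n] [CommRing R] {C : Matrix n n R}
    (hC : IsUnit C.det) (P : Matrix n n R) (f : n → R) :
    (P *ᵥ f) ᵥ* C⁻¹ = (Cᵀ⁻¹ * P * Cᵀ) *ᵥ (f ᵥ* C⁻¹) := by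
  have hCt : Cᵀ * Cᵀ⁻¹ = 1 := mul_nonsing_inv _ (by rwa [det_transpose])
  rw [← mulVec_transpose, ← mulVec_transpose, transpose_nonsing_inv]
  simp only [mulVec_mulVec, Matrix.mul_assoc, hCt, Matrix.mul_one]

theorem mulVec_nonneg [CommRing R] [PartialOrder R] [IsOrderedRing R] {M : Matrix n n R}
    (hM : ∀ i j, 0 ≤ M i j) {v : n → R} (hv : ∀ i, 0 ≤ v i) (i : n) : 0 ≤ (M *ᵥ v) i :=
  Finset.sum_nonneg fun j _ => mul_nonneg (hM i j) (hv j)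

theorem inv_transpose_mul_mul_transpose_nonneg_iff [DecidableEq n] [CommRing R] [PartialOrder R]
    [IsOrderedRing R]
    {C : Matrix n n R} (hC : IsUnit C.det) (P : Matrix n n R) :
    (∀ i j, 0 ≤ (Cᵀ⁻¹ * P * Cᵀ) i j) ↔
      ∀ f : n → R, (∀ i, 0 ≤ (f ᵥ* C⁻¹) i) → ∀ i, 0 ≤ ((P *ᵥ f) ᵥ* C⁻¹) i := by
  simp only [mulVec_vecMul_nonsing_inv hC]
  refine ⟨fun hM f hf => mulVec_nonneg hM hf, fun h i j => ?_⟩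
  have hrow : C.row j ᵥ* C⁻¹ = Pi.single j 1 := by
    rw [← single_one_vecMul, vecMul_vecMul, mul_nonsing_inv _ hC, vecMul_one]
  have := h (C.row j) (by rw [hrow]; exact Pi.single_nonneg.2 zero_le_one) i
  rwa [hrow, mulVec_single_one] at this

end Matrix

theorem stmt3_general {E : Type*} [Fintype E] [DecidableEq E] [PartialOrder E]
    [DecidableRel ((· ≤ ·) : E → E → Prop)]
    (P : Matrix E E ℝ) :
    (∀ e e', 0 ≤ ((((zeta E)ᵀ)⁻¹ * P * (zeta E)ᵀ)) e e')
    ↔ (∀ f : E → ℝ, UpMobiusMonotoneFun f →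
        UpMobiusMonotoneFun (fun e => ∑ e', P e e' * f e')) :=
  Matrix.inv_transpose_mul_mul_transpose_nonneg_iff (det_zeta E ▸ isUnit_one) P

/-- `P` is ↑-Möbius monotone iff `P` maps ↑-Möbius monotone
functions to ↑-Möbius monotone functions. -/
theorem stmt3 {E : Type*} [Fintype E] [DecidableEq E] [PartialOrder E]
    [DecidableRel ((· ≤ ·) : E → E → Prop)]
    (P : Matrix E E ℝ) (hP : IsStochastic P) :
    (∀ e e', 0 ≤ ((((zeta E)ᵀ)⁻¹ * P * (zeta E)ᵀ)) e e')
    ↔ (∀ f : E → ℝ, UpMobiusMonotoneFun f →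
        UpMobiusMonotoneFun (fun e => ∑ e', P e e' * f e')) :=
  stmt3_general P
end

section
/- On E = {0,1}² with the coordinatewise partial order, the function f defined by f(0,0) = −1, f(0,1) = −1, f(1,0) = −1, f(1,1) = 0 belongs to the class F (i.e., Σ_e π₁(e)f(e) ≤ Σ_e π₂(e)f(e) for all probability vectors π₁ ≼↑ π₂), but f is not ↑-Möbius monotone. Hence the set of ↑-Möbius monotone functions is strictly contained in F. -/
open Finset Matrix

/-- `π` is a probability vector. -/
def IsProbVec {E : Type*} [Fintype E] (π : E → ℝ) : Prop :=
  (∀ e, 0 ≤ π e) ∧ ∑ e, π e = 1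

/-- `π₁ ≼↑ π₂` : `π₁({e}↑) ≤ π₂({e}↑)` for every `e`. -/
def UpLE {E : Type*} [Fintype E] [PartialOrder E]
    [DecidableRel ((· ≤ ·) : E → E → Prop)] (π₁ π₂ : E → ℝ) : Prop :=
  ∀ e, ∑ e' ∈ univ.filter (fun e' => e ≤ e'), π₁ e'
      ≤ ∑ e' ∈ univ.filter (fun e' => e ≤ e'), π₂ e'

/-- The class `F` of functions `f` with `∫ f dπ₁ ≤ ∫ f dπ₂` whenever `π₁ ≼↑ π₂`. -/
def InClassF {E : Type*} [Fintype E] [PartialOrder E]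
    [DecidableRel ((· ≤ ·) : E → E → Prop)] (f : E → ℝ) : Prop :=
  ∀ π₁ π₂ : E → ℝ, IsProbVec π₁ → IsProbVec π₂ → UpLE π₁ π₂ →
    ∑ e, π₁ e * f e ≤ ∑ e, π₂ e * f e

/-! Writing `h = f C⁻¹`, we have `f = h C = ∑ h(e') 1_{{e'}↑}`, so `∑ π f = ∑ h(e') π({e'}↑)`,
which is monotone in `≼↑` as soon as `h ≥ 0`; adding a constant keeps this, as probability
vectors have mass one. Hence `-1 + 1_{⊤}` lies in `F`. On the other hand `(h C)(⊥) = h(⊥)`, so a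
↑-Möbius monotone function is nonnegative at `⊥`, while the example takes the value `-1` there. -/

section Zeta

variable {E : Type*} [Fintype E] [PartialOrder E] [DecidableRel ((· ≤ ·) : E → E → Prop)]

theorem vecMul_zeta_apply (v : E → ℝ) (e' : E) :
    (v ᵥ* zeta E) e' = ∑ e ∈ univ.filter (· ≤ e'), v e := by
  simp [vecMul, dotProduct, zeta, Finset.sum_filter]

theorem vecMul_zeta_apply_of_forall_lt {v : E → ℝ} {e' : E} (hv : ∀ e < e', v e = 0) :
    (v ᵥ* zeta E) e' = v e' := by
  rw [vecMul_zeta_apply]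
  refine sum_eq_single_of_mem e' (by simp) fun e he hne => hv e ?_
  exact lt_of_le_of_ne (mem_filter.mp he).2 hne

theorem vecMul_zeta_apply_bot [OrderBot E] (v : E → ℝ) : (v ᵥ* zeta E) ⊥ = v ⊥ :=
  vecMul_zeta_apply_of_forall_lt fun _ he => absurd he not_lt_bot

theorem vecMul_zeta_injective : Function.Injective (zeta E).vecMul := by
  refine (injective_iff_map_eq_zero (vecMulLinear (zeta E))).mpr fun v hv => funext fun e' => ?_
  induction e' using WellFoundedLT.induction with
  | ind e' ih => rw [← vecMul_zeta_apply_of_forall_lt ih]; exact congrFun hv e'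

theorem isUnit_zeta [DecidableEq E] : IsUnit (zeta E) :=
  vecMul_injective_iff_isUnit.mp vecMul_zeta_injective

theorem vecMul_inv_zeta_vecMul_zeta [DecidableEq E] (f : E → ℝ) :
    f ᵥ* (zeta E)⁻¹ ᵥ* zeta E = f := by
  rw [vecMul_vecMul, nonsing_inv_mul _ ((isUnit_iff_isUnit_det _).mp isUnit_zeta), vecMul_one]

theorem sum_mul_vecMul_zeta (h π : E → ℝ) :
    ∑ e, π e * (h ᵥ* zeta E) e = ∑ e', h e' * ∑ e ∈ univ.filter (e' ≤ ·), π e := by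
  simp only [vecMul_zeta_apply, Finset.mul_sum, Finset.sum_filter]
  rw [Finset.sum_comm]
  exact Finset.sum_congr rfl fun _ _ => Finset.sum_congr rfl fun _ _ => by split_ifs <;> ring

theorem inClassF_vecMul_zeta {h : E → ℝ} (hh : 0 ≤ h) : InClassF (h ᵥ* zeta E) := by
  intro π₁ π₂ _ _ hle
  rw [sum_mul_vecMul_zeta, sum_mul_vecMul_zeta]
  exact sum_le_sum fun e' _ => mul_le_mul_of_nonneg_left (hle e') (hh e')

theorem InClassF.add_const {f : E → ℝ} (hf : InClassF f) (c : ℝ) :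
    InClassF (fun e => f e + c) := by
  intro π₁ π₂ hπ₁ hπ₂ hle
  have hsum (π : E → ℝ) (hπ : IsProbVec π) : ∑ e, π e * (f e + c) = ∑ e, π e * f e + c := by
    simp only [mul_add, sum_add_distrib, ← sum_mul, hπ.2, one_mul]
  rw [hsum π₁ hπ₁, hsum π₂ hπ₂]
  exact add_le_add_left (hf π₁ π₂ hπ₁ hπ₂ hle) c

theorem inClassF_ite_eq_top [DecidableEq E] [OrderTop E] :
    InClassF (fun e : E => if e = ⊤ then (0 : ℝ) else -1) := by
  have hf : (fun e : E => if e = ⊤ then (0 : ℝ) else -1) =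
      fun e => (Pi.single ⊤ 1 ᵥ* zeta E) e + -1 := by
    funext e
    by_cases he : e = ⊤ <;> simp [he, zeta]
  rw [hf]
  exact (inClassF_vecMul_zeta (Pi.single_nonneg.mpr zero_le_one)).add_const (-1)

variable [DecidableEq E]

theorem UpMobiusMonotoneFun.inClassF {f : E → ℝ} (hf : UpMobiusMonotoneFun f) : InClassF f := by
  rw [← vecMul_inv_zeta_vecMul_zeta f]
  exact inClassF_vecMul_zeta hf

theorem UpMobiusMonotoneFun.nonneg_bot [OrderBot E] {f : E → ℝ} (hf : UpMobiusMonotoneFun f) :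
    0 ≤ f ⊥ := by
  have h := vecMul_zeta_apply_bot (f ᵥ* (zeta E)⁻¹)
  rw [vecMul_inv_zeta_vecMul_zeta] at h
  exact h ▸ hf ⊥

end Zeta

/-- on the two-dimensional cube `{0,1}²` (here `Bool × Bool` with
the coordinatewise order), the function with value `-1` except at the top,
where it is `0`, lies in the class `F` but is not ↑-Möbius monotone; hence the
↑-Möbius monotone functions form a strict subset of `F`. -/
theorem stmt7 :
    InClassF (fun e : Bool × Bool => if e = (true, true) then (0 : ℝ) else -1) ∧
    ¬ UpMobiusMonotoneFun
        (fun e : Bool × Bool => if e = (true, true) then (0 : ℝ) else -1) ∧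
    {f : Bool × Bool → ℝ | UpMobiusMonotoneFun f} ⊂ {f : Bool × Bool → ℝ | InClassF f} := by
  have hF : InClassF (fun e : Bool × Bool => if e = (true, true) then (0 : ℝ) else -1) :=
    inClassF_ite_eq_top
  have hM : ¬ UpMobiusMonotoneFun
      (fun e : Bool × Bool => if e = (true, true) then (0 : ℝ) else -1) :=
    fun h => absurd h.nonneg_bot (by norm_num [Prod.fst_bot, Prod.ext_iff])
  exact ⟨hF, hM, fun _ => UpMobiusMonotoneFun.inClassF, fun hsub => hM (hsub hF)⟩
end

section
/- Under the hypotheses of the strong stationary duality theorem for ↓-Möbius monotone chains (E a finite partially ordered set with unique maximal element e_M, P irreducible stochastic with strictly positive stationary distribution π, g = ν/π ↓-Möbius monotone, and the time reversal ←P ↓-Möbius monotone), the dual matrix P* defined by P*(e_i,e_j) = (H(e_j)/H(e_i))·Σ_{e ≥ e_j} μ(e_j,e)·←P(e,{e_i}↓) satisfies P*(e_M,e_M) = 1 (i.e., e_M is an absorbing state for P*), and the row Λ(e_M,·) of the link Λ(e_j,e_i) = 1{e_i ≤ e_j}·π(e_i)/H(e_j) equals π. -/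
open Finset Matrix

/-!
As `e_M` is the top element, `{e_M}↓` is all of `E`, so `H(e_M) = 1` and `Λ(e_M,·) = π`. The only
`e ≥ e_M` is `e_M` itself, and `μ(e_M,e_M) = 1`, so `P*(e_M,e_M)` collapses to the full row sum of
`←P` at `e_M`, which is `1` by stationarity of `π`.
-/

section Zeta

variable {E : Type*} [Fintype E] [DecidableEq E] [PartialOrder E]
    [DecidableRel ((· ≤ ·) : E → E → Prop)]

-- Listed along a linear extension of `≤`, the zeta matrix is upper unitriangular.
theorem det_zeta_s10 : (zeta E).det = 1 := by
  let _ : Fintype (LinearExtension E) := ‹Fintype E›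
  let σ : LinearExtension E ≃ E := Equiv.refl E
  have hupper : ((zeta E).submatrix σ σ).IsUpperTriangular :=
    fun i j hji => if_neg fun hij => ((toLinearExtension (α := E)).monotone hij).not_gt hji
  rw [← det_submatrix_equiv_self σ, det_of_isUpperTriangular hupper]
  simp [zeta]

theorem Matrix.inv_row_eq_single {n : Type*} [Fintype n] [DecidableEq n] {R : Type*} [CommRing R]
    {A : Matrix n n R} (hA : IsUnit A.det) {i : n} (hi : A i = Pi.single i 1) :
    A⁻¹ i = Pi.single i 1 := by
  calc A⁻¹ i = Pi.single i 1 ᵥ* A ᵥ* A⁻¹ := by rw [single_one_vecMul, row, hi, single_one_vecMul]; rfl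
    _ = Pi.single i 1 := by rw [vecMul_vecMul, mul_nonsing_inv A hA, vecMul_one]

theorem zeta_row_of_isMax {eM : E} (h : IsMax eM) : zeta E eM = Pi.single eM 1 := by
  funext e
  by_cases he : e = eM
  · simp [zeta, he]
  · simp [zeta, he, mt h.eq_of_ge he]

theorem inv_zeta_apply_of_isMax {eM : E} (h : IsMax eM) : (zeta E)⁻¹ eM eM = 1 := by
  rw [Matrix.inv_row_eq_single (by simp [det_zeta_s10]) (zeta_row_of_isMax h)]
  simp

end Zeta

theorem sum_timeReversal_eq_one {E : Type*} [Fintype E] {P : Matrix E E ℝ} {π : E → ℝ}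
    (hstat : ∀ e', ∑ e, π e * P e e' = π e') {e : E} (he : π e ≠ 0) :
    ∑ e', π e' * P e' e / π e = 1 := by
  rw [← Finset.sum_div, hstat e, div_self he]

theorem stmt10_general {E : Type*} [Fintype E] [DecidableEq E] [PartialOrder E]
    [DecidableRel ((· ≤ ·) : E → E → Prop)]
    (eM : E) (hmax : ∀ e, e ≤ eM)
    (P : Matrix E E ℝ)
    (π : E → ℝ) (hπ : IsProbVec π) (hπpos : ∀ e, 0 < π e)
    (hstat : ∀ e', ∑ e, π e * P e e' = π e')
    (Prev : Matrix E E ℝ) (hPrev : ∀ e e', Prev e e' = π e' * P e' e / π e)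
    (H : E → ℝ) (hH : ∀ e, H e = ∑ e' ∈ univ.filter (fun e' => e' ≤ e), π e')
    (Λ : Matrix E E ℝ)
    (hΛ : ∀ ej ei, Λ ej ei = if ei ≤ ej then π ei / H ej else 0)
    (Pd : Matrix E E ℝ)
    (hPd : ∀ ei ej, Pd ei ej = (H ej / H ei) *
      ∑ e ∈ univ.filter (fun e => ej ≤ e), (zeta E)⁻¹ ej e *
        (∑ e' ∈ univ.filter (fun e' => e' ≤ ei), Prev e e')) :
    Pd eM eM = 1 ∧ ∀ e, Λ eM e = π e := by
  have hisMax : IsMax eM := IsTop.isMax hmax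
  have hsub : univ.filter (· ≤ eM) = univ := filter_true_of_mem fun e _ => hmax e
  have hsup : univ.filter (eM ≤ ·) = {eM} := by
    ext e
    simpa using ⟨hisMax.eq_of_ge, fun h => h ▸ le_rfl⟩
  have hHeM : H eM = 1 := by rw [hH, hsub, hπ.2]
  refine ⟨?_, fun e => by rw [hΛ, if_pos (hmax e), hHeM, div_one]⟩
  simp_rw [hPd, hHeM, hsup, hsub, sum_singleton, inv_zeta_apply_of_isMax hisMax,
    hPrev, sum_timeReversal_eq_one hstat (hπpos eM).ne', div_one, one_mul]

/-- under the hypotheses of the strong stationary duality theorem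
for ↓-Möbius monotone chains, the unique maximal state `e_M` is absorbing for
the dual matrix `P*` (i.e. `P*(e_M,e_M) = 1`) and the row `Λ(e_M,·)` of the
link equals `π`. -/
theorem stmt10 {E : Type*} [Fintype E] [DecidableEq E] [PartialOrder E]
    [DecidableRel ((· ≤ ·) : E → E → Prop)]
    (eM : E) (hmax : ∀ e, e ≤ eM)
    (P : Matrix E E ℝ) (hP : IsStochastic P)
    (hirr : ∀ e e' : E, ∃ n : ℕ, 0 < (P ^ n) e e')
    (π : E → ℝ) (hπ : IsProbVec π) (hπpos : ∀ e, 0 < π e)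
    (hstat : ∀ e', ∑ e, π e * P e e' = π e')
    (ν : E → ℝ) (hν : IsProbVec ν)
    (Prev : Matrix E E ℝ) (hPrev : ∀ e e', Prev e e' = π e' * P e' e / π e)
    (g : E → ℝ) (hg : ∀ e, g e = ν e / π e)
    (H : E → ℝ) (hH : ∀ e, H e = ∑ e' ∈ univ.filter (fun e' => e' ≤ e), π e')
    (hgmon : ∀ e, 0 ≤ (g ᵥ* ((zeta E)ᵀ)⁻¹) e)
    (hPrevmon : ∀ e e', 0 ≤ ((zeta E)⁻¹ * Prev * zeta E) e e')
    (Λ : Matrix E E ℝ)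
    (hΛ : ∀ ej ei, Λ ej ei = if ei ≤ ej then π ei / H ej else 0)
    (Pd : Matrix E E ℝ)
    (hPd : ∀ ei ej, Pd ei ej = (H ej / H ei) *
      ∑ e ∈ univ.filter (fun e => ej ≤ e), (zeta E)⁻¹ ej e *
        (∑ e' ∈ univ.filter (fun e' => e' ≤ ei), Prev e e')) :
    Pd eM eM = 1 ∧ ∀ e, Λ eM e = π e :=
  stmt10_general eM hmax P π hπ hπpos hstat Prev hPrev H hH Λ hΛ Pd hPd
end
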